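/- arXiv:2003.10261 — 4 statements merged into one kernel-verified Lean document; each statement's English description precedes it below -/
import Mathlib

section
/- Let F : ℝ² → ℝ² be defined by F(x₁, x₂) = (-x₂, 2x₁), X = [0,1]², and X* = {x ∈ X : x₂ = 0}. Then the gap function G(x) = max_{y ∈ X} ⟨F(y), x - y⟩ satisfies G(x) = 2x₂ = 2·dist(x, X*) for all x ∈ X. -/
/-!
For `x = (a, b)` and `y = (c, d)` in the unit square, `⟪F y, x - y⟫ = -d (a - c) + 2c (b - d)
= 2cb - ad - cd ≤ 2b`, with equality at `y = (1, 0)`. The set `X*` is the bottom edge of the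
square, and the point of it nearest to `x` is its projection `(a, 0)`, at distance `b`.
-/

open scoped RealInnerProductSpace
open Set

lemma EuclideanSpace.real_inner_fin_two (u v : EuclideanSpace ℝ (Fin 2)) :
    ⟪u, v⟫ = u 0 * v 0 + u 1 * v 1 := by
  simp [PiLp.inner_apply, Fin.sum_univ_two, mul_comm]

lemma EuclideanSpace.infDist_eq_abs_apply {ι : Type*} [Fintype ι] [DecidableEq ι]
    {S : Set (EuclideanSpace ℝ ι)} {x : EuclideanSpace ℝ ι} {i : ι}
    (hS : ∀ y ∈ S, y i = 0) (hx : x - EuclideanSpace.single i (x i) ∈ S) :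
    Metric.infDist x S = |x i| := by
  refine le_antisymm ?_ ((Metric.le_infDist ⟨_, hx⟩).2 fun y hy => ?_)
  · calc Metric.infDist x S ≤ dist x (x - EuclideanSpace.single i (x i)) :=
          Metric.infDist_le_dist_of_mem hx
      _ = |x i| := by simp
  · calc |x i| = dist (x i) (y i) := by simp [hS y hy]
      _ ≤ dist x y := PiLp.dist_apply_le x y i

lemma neg_mul_sub_add_two_mul_mul_sub_le {a b c d : ℝ} (ha : 0 ≤ a) (hb : 0 ≤ b)
    (hc : c ∈ Icc 0 1) (hd : 0 ≤ d) :
    -d * (a - c) + 2 * c * (b - d) ≤ 2 * b := by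
  nlinarith [mul_nonneg hd ha, mul_nonneg hc.1 hd, mul_le_of_le_one_left hb hc.2]

/-- For F(x₁,x₂) = (-x₂, 2x₁), X = [0,1]² and X* = {x ∈ X : x₂ = 0}, the gap
    function G(x) = max_{y ∈ X} ⟨F(y), x - y⟩ satisfies
    G(x) = 2x₂ = 2·dist(x, X*) for all x ∈ X. -/
theorem gap_function_example :
    let F : EuclideanSpace ℝ (Fin 2) → EuclideanSpace ℝ (Fin 2) :=
      fun x => WithLp.toLp 2 ![-(x 1), 2 * x 0]
    let X : Set (EuclideanSpace ℝ (Fin 2)) :=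
      {x | x 0 ∈ Set.Icc (0 : ℝ) 1 ∧ x 1 ∈ Set.Icc (0 : ℝ) 1}
    let Xstar : Set (EuclideanSpace ℝ (Fin 2)) := {x | x ∈ X ∧ x 1 = 0}
    ∀ x ∈ X, IsGreatest {v : ℝ | ∃ y ∈ X, v = ⟪F y, x - y⟫} (2 * x 1) ∧
      2 * x 1 = 2 * Metric.infDist x Xstar := by
  intro F X Xstar x ⟨hx0, hx1⟩
  have hgap (y : EuclideanSpace ℝ (Fin 2)) :
      ⟪F y, x - y⟫ = -(y 1) * (x 0 - y 0) + 2 * y 0 * (x 1 - y 1) := by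
    simp [F, EuclideanSpace.real_inner_fin_two]
  have hdist : Metric.infDist x Xstar = x 1 := by
    rw [EuclideanSpace.infDist_eq_abs_apply (fun y hy => hy.2), abs_of_nonneg hx1.1]
    simpa [Xstar, X] using hx0
  refine ⟨⟨⟨EuclideanSpace.single 0 1, by simp [X], by simp [hgap]⟩, ?_⟩, by rw [hdist]⟩
  rintro _ ⟨y, ⟨hy0, hy1⟩, rfl⟩
  rw [hgap]
  exact neg_mul_sub_add_two_mul_mul_sub_le hx0.1 hx1.1 hy0 hy1.1
end

section
/- Let F : ℝⁿ → ℝⁿ be monotone and L : ℝ^{Nm} → ℝ^{Nm} a symmetric positive-semidefinite linear map, A ∈ ℝ^{Nm×n}, b ∈ ℝ^{Nm}. Define 𝒜(x, z, λ) = (F(x) + Aᵀλ, Lλ, Lλ + b - Ax - Lz). Then 𝒜 is monotone on ℝⁿ × ℝ^{Nm} × ℝ^{Nm}. -/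
/-!
The operator is the monotone map `(x, z, λ) ↦ (F x, 0, L λ + b)` plus the linear map with block
matrix `[[0, 0, Aᵀ], [0, 0, L], [-A, -L, 0]]`, which is skew because `Aᵀ` is the adjoint of `A`
and `L` is symmetric. In the monotonicity form the skew part contributes nothing, leaving
`⟪F x - F x', x - x'⟫ + ⟪L (λ - λ'), λ - λ'⟫ ≥ 0`.
-/

open scoped RealInnerProductSpace
open Matrix

/-- Viewing a plain vector in `Fin q → ℝ` as an element of Euclidean space. -/
def ev {q : ℕ} (v : Fin q → ℝ) : EuclideanSpace ℝ (Fin q) := WithLp.toLp 2 v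

section

variable {E G : Type*} [NormedAddCommGroup E] [InnerProductSpace ℝ E] [FiniteDimensional ℝ E]
  [NormedAddCommGroup G] [InnerProductSpace ℝ G] [FiniteDimensional ℝ G]

theorem LinearMap.IsPositive.inner_extended_operator_sub_nonneg {F : E → E}
    (hF : ∀ x y, ⟪F x - F y, x - y⟫ ≥ 0) (T : E →ₗ[ℝ] G) {S : G →ₗ[ℝ] G} (hS : S.IsPositive)
    (b : G) (x x' : E) (z z' l l' : G) :
    ⟪(F x + T.adjoint l) - (F x' + T.adjoint l'), x - x'⟫ + ⟪S l - S l', z - z'⟫ +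
      ⟪(S l + b - T x - S z) - (S l' + b - T x' - S z'), l - l'⟫ ≥ 0 := by
  have skew_part_cancels :
      ⟪(F x + T.adjoint l) - (F x' + T.adjoint l'), x - x'⟫ + ⟪S l - S l', z - z'⟫ +
        ⟪(S l + b - T x - S z) - (S l' + b - T x' - S z'), l - l'⟫ =
      ⟪F x - F x', x - x'⟫ + ⟪S (l - l'), l - l'⟫ := by
    have hT := (T.adjoint_inner_left (x - x') (l - l')).trans (real_inner_comm _ _)
    have hS_symm := (hS.isSymmetric (l - l') (z - z')).trans (real_inner_comm _ _)
    simp only [map_sub] at hT hS_symm ⊢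
    simp only [inner_add_left, inner_sub_left, inner_sub_right] at hT hS_symm ⊢
    linarith
  rw [skew_part_cancels]
  exact add_nonneg (hF x x') (hS.inner_nonneg_left _)

end

theorem ev_mulVec {m k : ℕ} (M : Matrix (Fin m) (Fin k) ℝ) (v : EuclideanSpace ℝ (Fin k)) :
    ev (M *ᵥ v) = toEuclideanLin M v :=
  rfl

theorem Matrix.toEuclideanLin_transpose_eq_adjoint {m k : Type*} [Fintype m] [DecidableEq m]
    [Fintype k] [DecidableEq k] (M : Matrix m k ℝ) :
    toEuclideanLin Mᵀ = (toEuclideanLin M).adjoint := by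
  rw [← conjTranspose_eq_transpose_of_trivial, toEuclideanLin_conjTranspose_eq_adjoint]

theorem extended_operator_monotone_general {n q : ℕ}
    (F : EuclideanSpace ℝ (Fin n) → EuclideanSpace ℝ (Fin n))
    (hF : ∀ x y, ⟪F x - F y, x - y⟫ ≥ 0)
    (L : Matrix (Fin q) (Fin q) ℝ) (hLpsd : L.PosSemidef)
    (A : Matrix (Fin q) (Fin n) ℝ) (b : EuclideanSpace ℝ (Fin q)) :
    ∀ (x x' : EuclideanSpace ℝ (Fin n)) (z z' l l' : EuclideanSpace ℝ (Fin q)),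
      ⟪(F x + ev (Aᵀ.mulVec l)) - (F x' + ev (Aᵀ.mulVec l')), x - x'⟫ +
      ⟪ev (L.mulVec l) - ev (L.mulVec l'), z - z'⟫ +
      ⟪(ev (L.mulVec l) + b - ev (A.mulVec x) - ev (L.mulVec z)) -
          (ev (L.mulVec l') + b - ev (A.mulVec x') - ev (L.mulVec z')),
        l - l'⟫ ≥ 0 := by
  intro x x' z z' l l'
  simp only [ev_mulVec, toEuclideanLin_transpose_eq_adjoint]
  exact (isPositive_toEuclideanLin_iff.mpr hLpsd).inner_extended_operator_sub_nonneg hF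
    (toEuclideanLin A) b x x' z z' l l'

/-- With F monotone, L symmetric PSD, the extended operator
    𝒜(x, z, λ) = (F(x) + Aᵀλ, Lλ, Lλ + b - Ax - Lz) is monotone on
    ℝⁿ × ℝ^{Nm} × ℝ^{Nm} (the inner product on the product space being the sum of
    the componentwise Euclidean inner products). -/
theorem extended_operator_monotone {n q : ℕ}
    (F : EuclideanSpace ℝ (Fin n) → EuclideanSpace ℝ (Fin n))
    (hF : ∀ x y, ⟪F x - F y, x - y⟫ ≥ 0)
    (L : Matrix (Fin q) (Fin q) ℝ) (hLsymm : L.IsSymm) (hLpsd : L.PosSemidef)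
    (A : Matrix (Fin q) (Fin n) ℝ) (b : EuclideanSpace ℝ (Fin q)) :
    ∀ (x x' : EuclideanSpace ℝ (Fin n)) (z z' l l' : EuclideanSpace ℝ (Fin q)),
      ⟪(F x + ev (Aᵀ.mulVec l)) - (F x' + ev (Aᵀ.mulVec l')), x - x'⟫ +
      ⟪ev (L.mulVec l) - ev (L.mulVec l'), z - z'⟫ +
      ⟪(ev (L.mulVec l) + b - ev (A.mulVec x) - ev (L.mulVec z)) -
          (ev (L.mulVec l') + b - ev (A.mulVec x') - ev (L.mulVec z')),
        l - l'⟫ ≥ 0 :=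
  extended_operator_monotone_general F hF L hLpsd A b
end

section
/- If F : ℝⁿ → ℝⁿ is β-cocoercive and L ∈ ℝ^{m×m} is a symmetric positive semidefinite matrix with largest eigenvalue at most 2d*, then the mapping C(x, z, λ) = (F(x), 0, Lλ + b) on ℝⁿ × ℝᵖ × ℝᵐ is θ-cocoercive for any θ with 0 < θ ≤ min{1/(2d*), β}. -/
open scoped RealInnerProductSpace
open Matrix

lemma psd_clm_sq_le {E : Type*} [NormedAddCommGroup E] [InnerProductSpace ℝ E]
    [CompleteSpace E] (T : E →L[ℝ] E) (hsa : IsSelfAdjoint T)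
    (hpos : ∀ u : E, 0 ≤ ⟪T u, u⟫) (u : E) :
    ‖T u‖ ^ 2 ≤ ‖T‖ * ⟪T u, u⟫ := by
  set v := T u with hv
  by_cases hv0 : v = 0
  · simp [hv0]
  have hsym := hsa.isSymmetric
  have e2 : ⟪T u, v⟫ = ‖v‖ ^ 2 := by
    rw [← hv, real_inner_self_eq_norm_sq]
  have e3 : ⟪T v, u⟫ = ‖v‖ ^ 2 := by
    have h := hsym v u
    simp only [ContinuousLinearMap.coe_coe] at h
    rw [h, ← hv, real_inner_self_eq_norm_sq]
  have key : ∀ t : ℝ, 0 ≤ ⟪T v, v⟫ * (t * t) + (2 * ‖v‖ ^ 2) * t + ⟪T u, u⟫ := by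
    intro t
    calc (0:ℝ) ≤ ⟪T (u + t • v), u + t • v⟫ := hpos _
      _ = ⟪T u, u⟫ + t * ⟪T u, v⟫ + t * ⟪T v, u⟫ + t * t * ⟪T v, v⟫ := by
          rw [map_add, ContinuousLinearMap.map_smul, inner_add_left, inner_add_right,
            inner_add_right, real_inner_smul_left, real_inner_smul_left,
            real_inner_smul_right, real_inner_smul_right]
          ring
      _ = ⟪T v, v⟫ * (t * t) + (2 * ‖v‖ ^ 2) * t + ⟪T u, u⟫ := by
          rw [e2, e3]; ring
  have hdisc := discrim_le_zero key
  have hc : ⟪T v, v⟫ ≤ ‖T‖ * ‖v‖ ^ 2 := by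
    calc ⟪T v, v⟫ ≤ ‖T v‖ * ‖v‖ := real_inner_le_norm _ _
    _ ≤ (‖T‖ * ‖v‖) * ‖v‖ := by
        have := T.le_opNorm v
        nlinarith [norm_nonneg v]
    _ = ‖T‖ * ‖v‖ ^ 2 := by ring
  have hvpos : 0 < ‖v‖ ^ 2 := by
    have : 0 < ‖v‖ := norm_pos_iff.mpr hv0
    positivity
  rw [discrim] at hdisc
  nlinarith [hdisc, mul_le_mul_of_nonneg_right hc (hpos u), hvpos]

/-- If F is β-cocoercive and L is symmetric PSD with operator norm (largest
    eigenvalue) at most 2d*, then C(x, z, λ) = (F(x), 0, Lλ + b) is θ-cocoercive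
    on ℝⁿ × ℝᵖ × ℝᵐ for any 0 < θ ≤ min{1/(2d*), β}. -/
theorem extended_operator_cocoercive {n p m : ℕ}
    (F : EuclideanSpace ℝ (Fin n) → EuclideanSpace ℝ (Fin n)) (β : ℝ) (hβ : 0 < β)
    (hF : ∀ x y, ⟪F x - F y, x - y⟫ ≥ β * ‖F x - F y‖ ^ 2)
    (L : Matrix (Fin m) (Fin m) ℝ) (hLsymm : L.IsSymm) (hLpsd : L.PosSemidef)
    (dstar : ℝ) (hd : 0 < dstar)
    (hLnorm : ‖Matrix.toEuclideanCLM (𝕜 := ℝ) L‖ ≤ 2 * dstar)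
    (b : EuclideanSpace ℝ (Fin m)) (θ : ℝ) (hθ : 0 < θ)
    (hθle : θ ≤ min (1 / (2 * dstar)) β) :
    ∀ (x x' : EuclideanSpace ℝ (Fin n)) (z z' : EuclideanSpace ℝ (Fin p))
      (l l' : EuclideanSpace ℝ (Fin m)),
      ⟪F x - F x', x - x'⟫ + ⟪((0 : EuclideanSpace ℝ (Fin p)) - 0), z - z'⟫ +
        ⟪(ev (L.mulVec l) + b) - (ev (L.mulVec l') + b), l - l'⟫ ≥
      θ * (‖F x - F x'‖ ^ 2 + ‖(0 : EuclideanSpace ℝ (Fin p)) - 0‖ ^ 2 +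
        ‖(ev (L.mulVec l) + b) - (ev (L.mulVec l') + b)‖ ^ 2) := by
  intro x x' z z' l l'
  set T := Matrix.toEuclideanCLM (𝕜 := ℝ) L with hT
  -- identify ev mulVec with T
  have hTapp : ∀ u : EuclideanSpace ℝ (Fin m), T u = ev (L.mulVec u) := fun u => rfl
  have hsa : IsSelfAdjoint T := by
    rw [hT]
    exact (hLpsd.1.isSelfAdjoint).map (Matrix.toEuclideanCLM (𝕜 := ℝ))
  have hpos : ∀ u : EuclideanSpace ℝ (Fin m), 0 ≤ ⟪T u, u⟫ := by
    intro u
    have h := hLpsd.dotProduct_mulVec_nonneg (u : Fin m → ℝ)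
    have : ⟪T u, u⟫ = dotProduct (star (u : Fin m → ℝ)) (L.mulVec u) := by
      simp [hTapp, ev, inner, dotProduct, mul_comm]
    rw [this]
    simpa using h
  have hdiff : (ev (L.mulVec l) + b) - (ev (L.mulVec l') + b) = T (l - l') := by
    rw [map_sub, hTapp, hTapp]
    abel
  rw [hdiff]
  -- bounds
  have hθβ : θ ≤ β := le_trans hθle (min_le_right _ _)
  have hθd : θ ≤ 1 / (2 * dstar) := le_trans hθle (min_le_left _ _)
  have h1 : ⟪F x - F x', x - x'⟫ ≥ θ * ‖F x - F x'‖ ^ 2 := by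
    have := hF x x'
    nlinarith [sq_nonneg ‖F x - F x'‖]
  have h3 : ⟪T (l - l'), l - l'⟫ ≥ θ * ‖T (l - l')‖ ^ 2 := by
    have hb := psd_clm_sq_le T hsa hpos (l - l')
    have h2d : (0:ℝ) < 2 * dstar := by linarith
    have hθd' : θ * (2 * dstar) ≤ 1 := by
      rw [le_div_iff₀ h2d] at hθd
      linarith [hθd]
    have hTle : ‖T‖ ≤ 2 * dstar := hLnorm
    nlinarith [hpos (l - l'), sq_nonneg ‖T (l - l')‖, norm_nonneg T]
  have h2 : ⟪((0 : EuclideanSpace ℝ (Fin p)) - 0), z - z'⟫ = 0 := by simp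
  have h2' : ‖(0 : EuclideanSpace ℝ (Fin p)) - 0‖ = 0 := by simp
  rw [h2, h2']
  nlinarith [h1, h3]
end

section
/- If T : ℝⁿ → ℝⁿ is β-cocoercive and Ψ ∈ ℝ^{n×n} is symmetric positive definite, then Ψ⁻¹T is (βτ)-cocoercive with respect to the Ψ-induced inner product ⟨x, y⟩_Ψ = ⟨Ψx, y⟩, where τ = 1/‖Ψ⁻¹‖. -/
open scoped RealInnerProductSpace
open Matrix

/-! Writing `u = T x - T y`, the preconditioner cancels on the left: `Ψ (Ψ⁻¹T x - Ψ⁻¹T y) = u`,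
so the claim reads `β τ ⟪u, Ψ⁻¹ u⟫ ≤ ⟪u, x - y⟫`. Since `⟪u, Ψ⁻¹ u⟫ ≤ ‖Ψ⁻¹‖ ‖u‖²`, the left side
is at most `β ‖u‖²`, which is bounded by `⟪u, x - y⟫` by cocoercivity of `T`. -/

section InnerProductSpace

variable {E : Type*} [NormedAddCommGroup E] [InnerProductSpace ℝ E]

theorem ContinuousLinearMap.inner_map_self_le_opNorm_mul_sq (B : E →L[ℝ] E) (u : E) :
    ⟪u, B u⟫ ≤ ‖B‖ * ‖u‖ ^ 2 :=
  calc ⟪u, B u⟫ ≤ ‖u‖ * ‖B u‖ := real_inner_le_norm u (B u)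
    _ ≤ ‖u‖ * (‖B‖ * ‖u‖) := by gcongr; exact B.le_opNorm u
    _ = ‖B‖ * ‖u‖ ^ 2 := by ring

theorem ContinuousLinearMap.inv_opNorm_mul_inner_map_self_le (B : E →L[ℝ] E) (u : E) :
    ‖B‖⁻¹ * ⟪u, B u⟫ ≤ ‖u‖ ^ 2 := by
  rcases eq_or_ne ‖B‖ 0 with hB | hB
  · simp [hB]
  · calc ‖B‖⁻¹ * ⟪u, B u⟫ ≤ ‖B‖⁻¹ * (‖B‖ * ‖u‖ ^ 2) := by
          gcongr; exact B.inner_map_self_le_opNorm_mul_sq u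
      _ = ‖u‖ ^ 2 := inv_mul_cancel_left₀ hB _

theorem cocoercive_comp_of_leftInverse {T : E → E} {β : ℝ} (hβ : 0 ≤ β)
    (hT : ∀ x y, β * ‖T x - T y‖ ^ 2 ≤ ⟪T x - T y, x - y⟫)
    {A B : E →L[ℝ] E} (hAB : ∀ v, A (B v) = v) (x y : E) :
    β * ‖B‖⁻¹ * ⟪A (B (T x) - B (T y)), B (T x) - B (T y)⟫ ≤
      ⟪A (B (T x) - B (T y)), x - y⟫ := by
  rw [← map_sub, hAB]
  calc β * ‖B‖⁻¹ * ⟪T x - T y, B (T x - T y)⟫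
        = β * (‖B‖⁻¹ * ⟪T x - T y, B (T x - T y)⟫) := mul_assoc _ _ _
    _ ≤ β * ‖T x - T y‖ ^ 2 := by gcongr; exact B.inv_opNorm_mul_inner_map_self_le _
    _ ≤ ⟪T x - T y, x - y⟫ := hT x y

end InnerProductSpace

theorem Matrix.toEuclideanCLM_apply_toEuclideanCLM_nonsing_inv {𝕜 ι : Type*} [RCLike 𝕜]
    [Fintype ι] [DecidableEq ι] {M : Matrix ι ι 𝕜} (hM : IsUnit M.det)
    (v : EuclideanSpace 𝕜 ι) :
    toEuclideanCLM (𝕜 := 𝕜) M (toEuclideanCLM (𝕜 := 𝕜) M⁻¹ v) = v := by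
  rw [← mul_apply_eq_comp, ← map_mul, mul_nonsing_inv M hM, map_one, one_apply_eq_self]

theorem preconditioned_cocoercive_general {n : ℕ}
    (T : EuclideanSpace ℝ (Fin n) → EuclideanSpace ℝ (Fin n)) (β : ℝ) (hβ : 0 < β)
    (hT : ∀ x y, ⟪T x - T y, x - y⟫ ≥ β * ‖T x - T y‖ ^ 2)
    (Ψ : Matrix (Fin n) (Fin n) ℝ) (hΨpd : Ψ.PosDef) :
    let τ : ℝ := 1 / ‖Matrix.toEuclideanCLM (𝕜 := ℝ) Ψ⁻¹‖
    let S : EuclideanSpace ℝ (Fin n) → EuclideanSpace ℝ (Fin n) :=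
      fun x => Matrix.toEuclideanCLM (𝕜 := ℝ) Ψ⁻¹ (T x)
    ∀ x y, ⟪Matrix.toEuclideanCLM (𝕜 := ℝ) Ψ (S x - S y), x - y⟫ ≥
      β * τ * ⟪Matrix.toEuclideanCLM (𝕜 := ℝ) Ψ (S x - S y), S x - S y⟫ := by
  intro τ S x y
  have hΨ : IsUnit Ψ.det := isUnit_iff_ne_zero.mpr hΨpd.det_pos.ne'
  rw [show τ = ‖toEuclideanCLM (𝕜 := ℝ) Ψ⁻¹‖⁻¹ from one_div _]
  exact cocoercive_comp_of_leftInverse hβ.le hT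
    (toEuclideanCLM_apply_toEuclideanCLM_nonsing_inv hΨ) x y

/-- If T is β-cocoercive and Ψ is symmetric positive definite, then Ψ⁻¹T is
    (βτ)-cocoercive with respect to the Ψ-induced inner product
    ⟨x, y⟩_Ψ = ⟨Ψx, y⟩, where τ = 1/‖Ψ⁻¹‖. -/
theorem preconditioned_cocoercive {n : ℕ}
    (T : EuclideanSpace ℝ (Fin n) → EuclideanSpace ℝ (Fin n)) (β : ℝ) (hβ : 0 < β)
    (hT : ∀ x y, ⟪T x - T y, x - y⟫ ≥ β * ‖T x - T y‖ ^ 2)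
    (Ψ : Matrix (Fin n) (Fin n) ℝ) (hΨsymm : Ψ.IsSymm) (hΨpd : Ψ.PosDef) :
    let τ : ℝ := 1 / ‖Matrix.toEuclideanCLM (𝕜 := ℝ) Ψ⁻¹‖
    let S : EuclideanSpace ℝ (Fin n) → EuclideanSpace ℝ (Fin n) :=
      fun x => Matrix.toEuclideanCLM (𝕜 := ℝ) Ψ⁻¹ (T x)
    ∀ x y, ⟪Matrix.toEuclideanCLM (𝕜 := ℝ) Ψ (S x - S y), x - y⟫ ≥
      β * τ * ⟪Matrix.toEuclideanCLM (𝕜 := ℝ) Ψ (S x - S y), S x - S y⟫ :=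
  preconditioned_cocoercive_general T β hβ hT Ψ hΨpd
end
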